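/- Let A be an m × n complex matrix of rank a whose first a rows are linearly independent and whose remaining rows satisfy A_{i→} = Σ_{l=1}^{a} α_{i,l} A_{l→} for i = a+1, …, m, and let B be a p × q complex matrix of rank b whose first b columns are linearly independent and whose remaining columns satisfy B_{↓j} = Σ_{k=1}^{b} β_{k,j} B_{↓k} for j = b+1, …, q. Let C be an m × q complex matrix. Then A A⁽¹⁾ C B⁽¹⁾ B = C holds for every choice of {1}-inverses A⁽¹⁾ of A and B⁽¹⁾ of B if and only if the entries of C satisfy: C_{i,j} = Σ_{l=1}^{a} α_{i,l} C_{l,j} for all i > a and all j, and C_{i,j} = Σ_{k=1}^{b} β_{k,j} C_{i,k} for all j > b and all i (with the entries C_{i,j} for i ≤ a and j ≤ b arbitrary). -/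

import Mathlib

/-!
A `{1}`-inverse always exists, and `A A⁽¹⁾` fixes every `A X` while `B⁽¹⁾ B` fixes every
`Y B`. Hence the condition holds for all `{1}`-inverses iff `C = A X` and `C = Y B` for some
`X`, `Y`, i.e. the columns of `C` lie in the column space of `A` and its rows in the row space
of `B`. The column space of `A` is contained in the space of vectors obeying the relations `α`;
a vector of that space is determined by its first `a` entries, so its dimension is at most
`a = rank A` and the two spaces coincide. The same argument applied to `Bᵀ` handles `β`.
-/

open Finset Matrix

theorem LinearMap.exists_comp_comp_self_eq {K V W : Type*} [DivisionRing K] [AddCommGroup V]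
    [Module K V] [AddCommGroup W] [Module K W] (f : V →ₗ[K] W) :
    ∃ g : W →ₗ[K] V, f ∘ₗ g ∘ₗ f = f := by
  obtain ⟨s, hs⟩ := f.rangeRestrict.exists_rightInverse_of_surjective f.range_rangeRestrict
  obtain ⟨π, hπ⟩ := (range f).subtype.exists_leftInverse_of_injective (range f).ker_subtype
  refine ⟨s ∘ₗ π, LinearMap.ext fun x => ?_⟩
  have hπx : π (f x) = f.rangeRestrict x := LinearMap.congr_fun hπ (f.rangeRestrict x)
  have hsy : f (s (f.rangeRestrict x)) = f x :=
    congrArg Subtype.val (LinearMap.congr_fun hs (f.rangeRestrict x))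
  simp only [LinearMap.comp_apply, hπx, hsy]

section RelationSubspace

variable {K : Type*} [Field K] {m a : ℕ} (ha : a ≤ m) (α : Fin m → Fin a → K)

def relationSubspace : Submodule K (Fin m → K) where
  carrier := {v | ∀ i : Fin m, a ≤ (i : ℕ) → v i = ∑ l, α i l * v (Fin.castLE ha l)}
  add_mem' {u w} hu hw i hi := by
    simp only [Pi.add_apply, hu i hi, hw i hi, mul_add, sum_add_distrib]
  zero_mem' i hi := by simp
  smul_mem' c u hu i hi := by
    simp only [Pi.smul_apply, smul_eq_mul, hu i hi, mul_sum, mul_left_comm]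

theorem finrank_relationSubspace_le : Module.finrank K (relationSubspace ha α) ≤ a := by
  let restrict := LinearMap.funLeft K K (Fin.castLE ha) ∘ₗ (relationSubspace ha α).subtype
  suffices Function.Injective restrict by
    simpa using LinearMap.finrank_le_finrank_of_injective this
  rw [← LinearMap.ker_eq_bot, LinearMap.ker_eq_bot']
  intro v hv
  have hv' : ∀ l : Fin a, (v : Fin m → K) (Fin.castLE ha l) = 0 := congrFun hv
  ext i
  rcases lt_or_ge (i : ℕ) a with hi | hi
  · exact hv' ⟨i, hi⟩
  · simpa [hv'] using v.2 i hi

variable {n : Type*} [Fintype n] {A : Matrix (Fin m) n K}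

theorem range_mulVecLin_le_relationSubspace
    (hα : ∀ i : Fin m, a ≤ (i : ℕ) → A i = ∑ l, α i l • A (Fin.castLE ha l)) :
    LinearMap.range A.mulVecLin ≤ relationSubspace ha α := by
  rintro _ ⟨x, rfl⟩ i hi
  simp only [mulVecLin_apply, mulVec, hα i hi, sum_dotProduct, smul_dotProduct, smul_eq_mul]

theorem range_mulVecLin_eq_relationSubspace (hrank : A.rank = a)
    (hα : ∀ i : Fin m, a ≤ (i : ℕ) → A i = ∑ l, α i l • A (Fin.castLE ha l)) :
    LinearMap.range A.mulVecLin = relationSubspace ha α :=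
  Submodule.eq_of_le_of_finrank_le (range_mulVecLin_le_relationSubspace ha α hα)
    (hrank ▸ finrank_relationSubspace_le ha α)

end RelationSubspace

namespace Matrix

variable {K : Type*} [Field K]

theorem exists_mul_mul_self_eq {m n : Type*} [Fintype m] [Fintype n] (A : Matrix m n K) :
    ∃ A₁ : Matrix n m K, A * A₁ * A = A := by
  classical
  obtain ⟨g, hg⟩ := (toLin' A).exists_comp_comp_self_eq
  refine ⟨LinearMap.toMatrix' g, toLin'.injective ?_⟩
  rw [toLin'_mul, toLin'_mul, toLin'_toMatrix', LinearMap.comp_assoc, hg]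

theorem forall_mul_mul_mul_mul_eq_iff {m n p q : Type*} [Fintype m] [Fintype n] [Fintype p]
    [Fintype q] (A : Matrix m n K) (B : Matrix p q K) (C : Matrix m q K) :
    (∀ (A₁ : Matrix n m K) (B₁ : Matrix q p K),
        A * A₁ * A = A → B * B₁ * B = B → A * A₁ * C * B₁ * B = C) ↔
      (∃ X : Matrix n q K, A * X = C) ∧ ∃ Y : Matrix m p K, Y * B = C := by
  constructor
  · intro h
    obtain ⟨A₁, hA₁⟩ := A.exists_mul_mul_self_eq
    obtain ⟨B₁, hB₁⟩ := B.exists_mul_mul_self_eq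
    have hC := h A₁ B₁ hA₁ hB₁
    exact ⟨⟨A₁ * C * B₁ * B, by simpa only [Matrix.mul_assoc] using hC⟩, ⟨_, hC⟩⟩
  · rintro ⟨⟨X, hX⟩, ⟨Y, hY⟩⟩ A₁ B₁ hA₁ hB₁
    have hAC : A * A₁ * C = C := by rw [← hX, ← Matrix.mul_assoc, hA₁]
    have hCB : C * B₁ * B = C := by
      rw [← hY]
      simp only [Matrix.mul_assoc] at hB₁ ⊢
      rw [hB₁]
    rw [hAC, hCB]

theorem exists_mul_eq_iff_forall_col_mem_range {m n o : Type*} [Fintype n]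
    (A : Matrix m n K) (C : Matrix m o K) :
    (∃ X : Matrix n o K, A * X = C) ↔ ∀ j, Cᵀ j ∈ LinearMap.range A.mulVecLin := by
  constructor
  · rintro ⟨X, rfl⟩ j
    exact ⟨Xᵀ j, rfl⟩
  · intro h
    choose x hx using h
    exact ⟨(of x)ᵀ, ext fun i j => congrFun (hx j) i⟩

theorem exists_mul_eq_iff_forall_row_eq_sum {m a : ℕ} (ha : a ≤ m) {n o : Type*} [Fintype n]
    {A : Matrix (Fin m) n K} (C : Matrix (Fin m) o K) (hrank : A.rank = a)
    (α : Fin m → Fin a → K)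
    (hα : ∀ i : Fin m, a ≤ (i : ℕ) → A i = ∑ l, α i l • A (Fin.castLE ha l)) :
    (∃ X : Matrix n o K, A * X = C) ↔
      ∀ i : Fin m, a ≤ (i : ℕ) → ∀ j, C i j = ∑ l, α i l * C (Fin.castLE ha l) j := by
  rw [exists_mul_eq_iff_forall_col_mem_range, range_mulVecLin_eq_relationSubspace ha α hrank hα]
  exact ⟨fun h i hi j => h j i hi, fun h j i hi => h i hi j⟩

theorem exists_mul_right_eq_iff_forall_col_eq_sum {q b : ℕ} (hb : b ≤ q) {m p : Type*}
    [Fintype p] {B : Matrix p (Fin q) K} (C : Matrix m (Fin q) K) (hrank : B.rank = b)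
    (β : Fin b → Fin q → K)
    (hβ : ∀ j : Fin q, b ≤ (j : ℕ) → Bᵀ j = ∑ k, β k j • Bᵀ (Fin.castLE hb k)) :
    (∃ Y : Matrix m p K, Y * B = C) ↔
      ∀ j : Fin q, b ≤ (j : ℕ) → ∀ i, C i j = ∑ k, β k j * C i (Fin.castLE hb k) := by
  have htranspose : (∃ Y : Matrix m p K, Y * B = C) ↔ ∃ Y : Matrix p m K, Bᵀ * Y = Cᵀ :=
    ⟨fun ⟨Y, h⟩ => ⟨Yᵀ, by rw [← transpose_mul, h]⟩,
      fun ⟨Y, h⟩ => ⟨Yᵀ, by rw [← transpose_transpose C, ← h, transpose_mul, transpose_transpose]⟩⟩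
  rw [htranspose, exists_mul_eq_iff_forall_row_eq_sum hb Cᵀ ((rank_transpose B).trans hrank)
    (fun j k => β k j) hβ]
  rfl

end Matrix

open Finset Matrix in
theorem consistency_condition_all_one_inverses_general {m n p q a b : ℕ}
    (ha : a ≤ m) (hb : b ≤ q)
    (A : Matrix (Fin m) (Fin n) ℂ) (B : Matrix (Fin p) (Fin q) ℂ)
    (C : Matrix (Fin m) (Fin q) ℂ)
    (hrankA : A.rank = a) (hrankB : B.rank = b)
    (α : Fin m → Fin a → ℂ) (β : Fin b → Fin q → ℂ)
    (hα : ∀ i : Fin m, a ≤ (i : ℕ) →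
      A i = ∑ l : Fin a, α i l • A (Fin.castLE ha l))
    (hβ : ∀ j : Fin q, b ≤ (j : ℕ) →
      Bᵀ j = ∑ k : Fin b, β k j • Bᵀ (Fin.castLE hb k)) :
    (∀ (A1 : Matrix (Fin n) (Fin m) ℂ) (B1 : Matrix (Fin q) (Fin p) ℂ),
        A * A1 * A = A → B * B1 * B = B → A * A1 * C * B1 * B = C) ↔
      ((∀ i : Fin m, a ≤ (i : ℕ) → ∀ j : Fin q,
          C i j = ∑ l : Fin a, α i l * C (Fin.castLE ha l) j) ∧
        (∀ j : Fin q, b ≤ (j : ℕ) → ∀ i : Fin m,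
          C i j = ∑ k : Fin b, β k j * C i (Fin.castLE hb k))) := by
  rw [forall_mul_mul_mul_mul_eq_iff, exists_mul_eq_iff_forall_row_eq_sum ha C hrankA α hα,
    exists_mul_right_eq_iff_forall_col_eq_sum hb C hrankB β hβ]

open Finset Matrix in
/-- The consistency condition `A A⁽¹⁾ C B⁽¹⁾ B = C` holds for every choice of
`{1}`-inverses iff the rows of `C` below the first `a` and the columns of `C`
beyond the first `b` satisfy the same dependence relations as those of `A`
and `B` respectively. -/
theorem consistency_condition_all_one_inverses {m n p q a b : ℕ}
    (ha : a ≤ m) (hb : b ≤ q)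
    (A : Matrix (Fin m) (Fin n) ℂ) (B : Matrix (Fin p) (Fin q) ℂ)
    (C : Matrix (Fin m) (Fin q) ℂ)
    (hrankA : A.rank = a) (hrankB : B.rank = b)
    (hindA : LinearIndependent ℂ (fun l : Fin a => A (Fin.castLE ha l)))
    (hindB : LinearIndependent ℂ (fun k : Fin b => Bᵀ (Fin.castLE hb k)))
    (α : Fin m → Fin a → ℂ) (β : Fin b → Fin q → ℂ)
    (hα : ∀ i : Fin m, a ≤ (i : ℕ) →
      A i = ∑ l : Fin a, α i l • A (Fin.castLE ha l))
    (hβ : ∀ j : Fin q, b ≤ (j : ℕ) →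
      Bᵀ j = ∑ k : Fin b, β k j • Bᵀ (Fin.castLE hb k)) :
    (∀ (A1 : Matrix (Fin n) (Fin m) ℂ) (B1 : Matrix (Fin q) (Fin p) ℂ),
        A * A1 * A = A → B * B1 * B = B → A * A1 * C * B1 * B = C) ↔
      ((∀ i : Fin m, a ≤ (i : ℕ) → ∀ j : Fin q,
          C i j = ∑ l : Fin a, α i l * C (Fin.castLE ha l) j) ∧
        (∀ j : Fin q, b ≤ (j : ℕ) → ∀ i : Fin m,
          C i j = ∑ k : Fin b, β k j * C i (Fin.castLE hb k))) :=
  consistency_condition_all_one_inverses_general ha hb A B C hrankA hrankB α β hα hβ
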